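/- arXiv:1507.04743 — 3 statements merged into one kernel-verified Lean document; each statement's English description precedes it below -/
import Mathlib

section
/- For every positive integer N, the number of sublattices of ℤ² of index N equals σ(N) = Σ_{k∣N} k, the sum of the positive divisors of N. -/
/-!
A sublattice `Λ` of finite index has a unique basis `(a, 0), (b, d)` with `a, d > 0` and
`0 ≤ b < a` (Hermite normal form): `d ℤ` is the projection of `Λ` to the second coordinate,
`a ℤ × 0` is `Λ ∩ (ℤ × 0)`, and `b` is the first coordinate of any point of `Λ` of the form
`(x, d)`, reduced modulo `a`. Fibring `ℤ²/Λ` over the second coordinate shows that the index is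
`a d`, so the sublattices of index `N` are counted by `∑_{a d = N} a = σ(N)`.
-/

open AddSubgroup AddMonoidHom

theorem AddSubgroup.index_eq_index_map_mul_relIndex_ker {G G' : Type*} [AddGroup G]
    [AddGroup G'] (H : AddSubgroup G) [H.Normal] {f : G →+ G'} (hf : Function.Surjective f) :
    H.index = (H.map f).index * H.relIndex f.ker := by
  rw [index_map, f.range_eq_top_of_surjective hf, index_top, mul_one, sup_comm, mul_comm,
    ← relIndex_sup_right f.ker H, relIndex_mul_index le_sup_right]

theorem AddMonoidHom.range_inl_eq_ker_snd (A B : Type*) [AddGroup A] [AddGroup B] :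
    (inl A B).range = (snd A B).ker := by
  ext ⟨x, y⟩
  simp [eq_comm, AddSubgroup.mem_prod]

theorem AddSubgroup.index_eq_index_map_snd_mul_index_comap_inl {A B : Type*} [AddGroup A]
    [AddGroup B] (H : AddSubgroup (A × B)) [H.Normal] :
    H.index = (H.map (snd A B)).index * (H.comap (inl A B)).index := by
  rw [H.index_eq_index_map_mul_relIndex_ker (f := snd A B) Prod.snd_surjective, index_comap,
    range_inl_eq_ker_snd]

theorem Int.zmultiples_index (H : AddSubgroup ℤ) : zmultiples (H.index : ℤ) = H := by
  obtain ⟨a, rfl⟩ := Int.subgroup_cyclic H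
  rw [← zmultiples_eq_closure, Int.index_zmultiples, Int.zmultiples_natAbs]

def hermiteSublattice (a d : ℕ) (b : ℤ) : AddSubgroup (ℤ × ℤ) :=
  zmultiples ((a : ℤ), 0) ⊔ zmultiples (b, (d : ℤ))

section hermiteSublattice

variable {a d : ℕ} {b : ℤ}

theorem mem_hermiteSublattice {p : ℤ × ℤ} :
    p ∈ hermiteSublattice a d b ↔ ∃ k m : ℤ, k • ((a : ℤ), 0) + m • (b, (d : ℤ)) = p := by
  simp only [hermiteSublattice, mem_sup, mem_zmultiples_iff]
  constructor
  · rintro ⟨_, ⟨k, rfl⟩, _, ⟨m, rfl⟩, rfl⟩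
    exact ⟨k, m, rfl⟩
  · rintro ⟨k, m, rfl⟩
    exact ⟨_, ⟨k, rfl⟩, _, ⟨m, rfl⟩, rfl⟩

theorem map_snd_hermiteSublattice :
    (hermiteSublattice a d b).map (snd ℤ ℤ) = zmultiples (d : ℤ) := by
  simp [hermiteSublattice, AddSubgroup.map_sup]

theorem comap_inl_hermiteSublattice (hd : d ≠ 0) :
    (hermiteSublattice a d b).comap (inl ℤ ℤ) = zmultiples (a : ℤ) := by
  ext x
  simp only [mem_comap, inl_apply, mem_hermiteSublattice, Int.mem_zmultiples_iff]
  constructor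
  · rintro ⟨k, m, h⟩
    have hm : m * d = 0 := by simpa using congrArg Prod.snd h
    obtain rfl : m = 0 := by simpa [hd] using hm
    exact ⟨k, by simpa [mul_comm] using (congrArg Prod.fst h).symm⟩
  · rintro ⟨k, rfl⟩
    exact ⟨k, 0, by simp [mul_comm]⟩

theorem index_hermiteSublattice : (hermiteSublattice a d b).index = a * d := by
  rw [index_eq_index_map_snd_mul_index_comap_inl, map_snd_hermiteSublattice]
  rcases eq_or_ne d 0 with rfl | hd
  · simp
  · simp [comap_inl_hermiteSublattice hd, mul_comm]

theorem eq_hermiteSublattice {Λ : AddSubgroup (ℤ × ℤ)}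
    (hsnd : Λ.map (snd ℤ ℤ) = zmultiples (d : ℤ)) (hinl : Λ.comap (inl ℤ ℤ) = zmultiples (a : ℤ))
    (hb : (b, (d : ℤ)) ∈ Λ) : Λ = hermiteSublattice a d b := by
  refine le_antisymm (fun p hp => ?_) (sup_le ?_ (zmultiples_le.mpr hb))
  · obtain ⟨m, hm⟩ : (d : ℤ) ∣ p.2 := by
      rw [← Int.mem_zmultiples_iff, ← hsnd]
      exact mem_map_of_mem _ hp
    obtain ⟨k, hk⟩ : (a : ℤ) ∣ p.1 - m * b := by
      rw [← Int.mem_zmultiples_iff, ← hinl, mem_comap, inl_apply]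
      convert Λ.sub_mem hp (Λ.zsmul_mem hb m) using 1
      ext <;> simp [hm, mul_comm]
    refine mem_hermiteSublattice.mpr ⟨k, m, Prod.ext ?_ (by simp [hm, mul_comm])⟩
    simp only [Prod.smul_mk, Int.zsmul_eq_mul, mul_zero, Prod.mk_add_mk]
    linarith
  · rw [zmultiples_le, ← inl_apply, ← mem_comap, hinl]
    exact mem_zmultiples _

theorem exists_eq_hermiteSublattice {Λ : AddSubgroup (ℤ × ℤ)} (hΛ : Λ.index ≠ 0) :
    ∃ (a d : ℕ) (b : ℤ), 0 ≤ b ∧ b < a ∧ Λ = hermiteSublattice a d b := by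
  set d := (Λ.map (snd ℤ ℤ)).index
  set a := (Λ.comap (inl ℤ ℤ)).index
  have ha : a ≠ 0 := by
    rw [index_eq_index_map_snd_mul_index_comap_inl] at hΛ
    exact right_ne_zero_of_mul hΛ
  have hinl := (Int.zmultiples_index (Λ.comap (inl ℤ ℤ))).symm
  obtain ⟨p, hp, hpd⟩ : (d : ℤ) ∈ Λ.map (snd ℤ ℤ) := by
    rw [← Int.zmultiples_index (Λ.map (snd ℤ ℤ))]
    exact mem_zmultiples _
  have hb : (p.1 % a, (d : ℤ)) ∈ Λ := by
    have hshift : (p.1 % a - p.1, (0 : ℤ)) ∈ Λ := by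
      rw [← inl_apply, ← mem_comap, hinl, Int.mem_zmultiples_iff, Int.emod_def]
      exact ⟨-(p.1 / a), by ring⟩
    convert Λ.add_mem hshift hp using 1
    ext <;> simp [← hpd]
  refine ⟨a, d, p.1 % a, Int.emod_nonneg _ (by exact_mod_cast ha),
    Int.emod_lt_of_pos _ (by omega), ?_⟩
  exact eq_hermiteSublattice (Int.zmultiples_index _).symm hinl hb

theorem eq_of_hermiteSublattice_eq {a a' d d' : ℕ} {b b' : ℤ} (hd : d ≠ 0)
    (hb : 0 ≤ b) (hba : b < a) (hb' : 0 ≤ b') (hba' : b' < a')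
    (h : hermiteSublattice a d b = hermiteSublattice a' d' b') : a = a' ∧ d = d' ∧ b = b' := by
  obtain rfl : d = d' := by
    simpa [map_snd_hermiteSublattice] using congrArg (fun Λ ↦ (Λ.map (snd ℤ ℤ)).index) h
  obtain rfl : a = a' := by
    simpa [comap_inl_hermiteSublattice hd] using congrArg (fun Λ ↦ (Λ.comap (inl ℤ ℤ)).index) h
  refine ⟨rfl, rfl, ?_⟩
  have hbd : (b, (d : ℤ)) ∈ hermiteSublattice a d b' := h ▸ mem_sup_right (mem_zmultiples _)
  have hdiff : (b - b', (0 : ℤ)) ∈ hermiteSublattice a d b' := by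
    convert sub_mem hbd (mem_sup_right (mem_zmultiples _)) using 1
    simp
  rw [← inl_apply, ← mem_comap, comap_inl_hermiteSublattice hd, Int.mem_zmultiples_iff] at hdiff
  have := Int.eq_zero_of_abs_lt_dvd hdiff (by rw [abs_lt]; omega)
  omega

end hermiteSublattice

/-- The number of sublattices of `ℤ²` of index `N` equals `σ(N)`, the sum of the
positive divisors of `N`. A sublattice of index `N` is an additive subgroup `Λ` of
`ℤ × ℤ` such that the quotient group `(ℤ × ℤ) ⧸ Λ` has cardinality `N`. -/
theorem number_of_index_N_sublattices (N : ℕ) (hN : 0 < N) :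
    Nat.card {Λ : AddSubgroup (ℤ × ℤ) // Nat.card ((ℤ × ℤ) ⧸ Λ) = N} =
      ∑ k ∈ N.divisors, k := by
  let Φ : (Σ p : N.divisorsAntidiagonal, Fin p.1.1) →
      {Λ : AddSubgroup (ℤ × ℤ) // Nat.card ((ℤ × ℤ) ⧸ Λ) = N} := fun t ↦
    ⟨hermiteSublattice t.1.1.1 t.1.1.2 t.2, by
      rw [← index, index_hermiteSublattice, (Nat.mem_divisorsAntidiagonal.mp t.1.2).1]⟩
  have hΦ : Function.Bijective Φ := by
    constructor
    · rintro ⟨⟨⟨a, d⟩, hp⟩, u⟩ ⟨⟨⟨a', d'⟩, hp'⟩, u'⟩ h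
      have hd : d ≠ 0 := Nat.ne_zero_of_mem_divisorsAntidiagonal hp |>.2
      obtain ⟨rfl, rfl, hu⟩ := eq_of_hermiteSublattice_eq hd (Nat.cast_nonneg _)
        (by exact_mod_cast u.2) (Nat.cast_nonneg _) (by exact_mod_cast u'.2)
        (congrArg Subtype.val h)
      obtain rfl : u = u' := Fin.ext (by exact_mod_cast hu)
      rfl
    · rintro ⟨Λ, hΛ⟩
      obtain ⟨a, d, b, hb, hba, rfl⟩ := exists_eq_hermiteSublattice (hΛ.trans_ne hN.ne')
      have had : a * d = N := by rw [← hΛ, ← index, index_hermiteSublattice]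
      refine ⟨⟨⟨(a, d), Nat.mem_divisorsAntidiagonal.mpr ⟨had, hN.ne'⟩⟩,
        ⟨b.toNat, show b.toNat < a by omega⟩⟩, Subtype.ext ?_⟩
      simp [Φ, Int.toNat_of_nonneg hb]
  rw [← Nat.card_eq_of_bijective Φ hΦ, Nat.card_sigma]
  simp only [Nat.card_eq_fintype_card, Fintype.card_fin]
  rw [Finset.sum_coe_sort N.divisorsAntidiagonal Prod.fst,
    Nat.sum_divisorsAntidiagonal fun a _ ↦ a]
end

section
/- Every sublattice of ℤ² of index N lies in the SL(2,ℤ)-orbit of the sublattice (ab)ℤ × bℤ = {(x, y) ∈ ℤ² : ab ∣ x and b ∣ y} for exactly one pair of positive integers (a, b) with a b² = N; in particular the lattices {(ab)ℤ × bℤ : a b² = N} form a complete set of representatives of the orbits. -/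
/-!
Existence is the Smith normal form over `ℤ`, by a minimality argument. Over the whole orbit of
`Λ`, pick a lattice vector `v` whose second coordinate has least nonzero absolute value `b`.
Euclidean division by `v.2` — subtracting a multiple of `v` inside the lattice, or applying
`[[0, -1], [1, -q]]` to `v` — would otherwise produce a smaller nonzero second coordinate, so
`v.2` divides the second coordinate of every lattice vector and also `v.1`. A shear moves `v`
to `(0, v.2)`, and the lattice becomes `mℤ × bℤ` with `b ∣ m`.

Uniqueness: `b` is the largest `d` with `Λ ⊆ dℤ × dℤ`, a condition preserved by `SL(2, ℤ)`, and
the index `a b² = N` then determines `a`.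
-/

/-- The additive group endomorphism of `ℤ × ℤ` given by multiplication by a matrix
`A ∈ SL(2, ℤ)`. -/
def SL2Map (A : Matrix.SpecialLinearGroup (Fin 2) ℤ) : (ℤ × ℤ) →+ (ℤ × ℤ) where
  toFun v := (A.1 0 0 * v.1 + A.1 0 1 * v.2, A.1 1 0 * v.1 + A.1 1 1 * v.2)
  map_zero' := by simp
  map_add' v w := by simp [Prod.ext_iff]; constructor <;> ring

/-- The "rectangular" sublattice `mℤ × bℤ = {(x, y) ∈ ℤ² : m ∣ x ∧ b ∣ y}`. -/
def rectLat (m b : ℕ) : AddSubgroup (ℤ × ℤ) where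
  carrier := {v : ℤ × ℤ | (m : ℤ) ∣ v.1 ∧ (b : ℤ) ∣ v.2}
  zero_mem' := ⟨dvd_zero _, dvd_zero _⟩
  add_mem' := fun ha hb => ⟨dvd_add ha.1 hb.1, dvd_add ha.2 hb.2⟩
  neg_mem' := fun ha => ⟨dvd_neg.2 ha.1, dvd_neg.2 ha.2⟩

open scoped MatrixGroups

lemma SL2Map_apply (A : SL(2, ℤ)) (v : ℤ × ℤ) :
    SL2Map A v = (A.1 0 0 * v.1 + A.1 0 1 * v.2, A.1 1 0 * v.1 + A.1 1 1 * v.2) :=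
  rfl

lemma SL2Map_one : SL2Map 1 = AddMonoidHom.id (ℤ × ℤ) :=
  AddMonoidHom.ext fun v => by simp [SL2Map_apply]

lemma SL2Map_mul (A B : SL(2, ℤ)) : SL2Map (A * B) = (SL2Map A).comp (SL2Map B) :=
  AddMonoidHom.ext fun v => by
    simp only [SL2Map_apply, AddMonoidHom.comp_apply, Matrix.SpecialLinearGroup.coe_mul,
      Matrix.mul_apply, Fin.sum_univ_two]
    rw [Prod.ext_iff]
    constructor <;> ring

lemma map_SL2Map_mul (A B : SL(2, ℤ)) (Λ : AddSubgroup (ℤ × ℤ)) :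
    Λ.map (SL2Map (A * B)) = (Λ.map (SL2Map B)).map (SL2Map A) := by
  rw [SL2Map_mul, AddSubgroup.map_map]

lemma map_SL2Map_inv_map (A : SL(2, ℤ)) (Λ : AddSubgroup (ℤ × ℤ)) :
    (Λ.map (SL2Map A)).map (SL2Map A⁻¹) = Λ := by
  rw [← map_SL2Map_mul, inv_mul_cancel, SL2Map_one, AddSubgroup.map_id]

lemma SL2Map_bijective (A : SL(2, ℤ)) : Function.Bijective (SL2Map A) := by
  refine Function.bijective_iff_has_inverse.2 ⟨SL2Map A⁻¹, fun v => ?_, fun v => ?_⟩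
  · rw [← AddMonoidHom.comp_apply, ← SL2Map_mul, inv_mul_cancel, SL2Map_one]; rfl
  · rw [← AddMonoidHom.comp_apply, ← SL2Map_mul, mul_inv_cancel, SL2Map_one]; rfl

lemma index_map_SL2Map (A : SL(2, ℤ)) (Λ : AddSubgroup (ℤ × ℤ)) :
    (Λ.map (SL2Map A)).index = Λ.index :=
  AddSubgroup.index_map_of_bijective (SL2Map_bijective A) Λ

lemma mem_rectLat {m b : ℕ} {v : ℤ × ℤ} : v ∈ rectLat m b ↔ (m : ℤ) ∣ v.1 ∧ (b : ℤ) ∣ v.2 :=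
  Iff.rfl

lemma rectLat_eq_prod (m b : ℕ) :
    rectLat m b = (AddSubgroup.zmultiples (m : ℤ)).prod (AddSubgroup.zmultiples (b : ℤ)) := by
  ext v
  simp only [AddSubgroup.mem_prod, Int.mem_zmultiples_iff]
  rfl

lemma index_rectLat (m b : ℕ) : (rectLat m b).index = m * b := by
  simp [rectLat_eq_prod, AddSubgroup.index_prod, Int.index_zmultiples]

lemma map_SL2Map_rectLat_self_le (A : SL(2, ℤ)) (d : ℕ) :
    (rectLat d d).map (SL2Map A) ≤ rectLat d d := by
  rintro _ ⟨v, ⟨h1, h2⟩, rfl⟩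
  exact ⟨dvd_add (h1.mul_left _) (h2.mul_left _), dvd_add (h1.mul_left _) (h2.mul_left _)⟩

lemma map_SL2Map_le_rectLat_self_iff (A : SL(2, ℤ)) (Λ : AddSubgroup (ℤ × ℤ)) (d : ℕ) :
    Λ.map (SL2Map A) ≤ rectLat d d ↔ Λ ≤ rectLat d d := by
  refine ⟨fun h => ?_, fun h => (AddSubgroup.map_mono h).trans (map_SL2Map_rectLat_self_le A d)⟩
  rw [← map_SL2Map_inv_map A Λ]
  exact (AddSubgroup.map_mono h).trans (map_SL2Map_rectLat_self_le A⁻¹ d)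

lemma le_rectLat_self_iff_dvd {Λ : AddSubgroup (ℤ × ℤ)} {A : SL(2, ℤ)} {a b : ℕ}
    (h : Λ.map (SL2Map A) = rectLat (a * b) b) (d : ℕ) : Λ ≤ rectLat d d ↔ d ∣ b := by
  rw [← map_SL2Map_le_rectLat_self_iff A, h]
  refine ⟨fun hle => ?_, fun hdb v hv => ?_⟩
  · exact Int.natCast_dvd_natCast.1 (hle (show ((0 : ℤ), (b : ℤ)) ∈ rectLat (a * b) b from
      ⟨dvd_zero _, dvd_rfl⟩)).2
  · have hdb' : (d : ℤ) ∣ b := Int.natCast_dvd_natCast.2 hdb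
    exact ⟨hdb'.trans ((Int.natCast_dvd_natCast.2 (dvd_mul_left b a)).trans hv.1), hdb'.trans hv.2⟩

lemma eq_of_map_SL2Map_eq_rectLat {Λ : AddSubgroup (ℤ × ℤ)} {A A' : SL(2, ℤ)} {a b a' b' : ℕ}
    (h : Λ.map (SL2Map A) = rectLat (a * b) b) (h' : Λ.map (SL2Map A') = rectLat (a' * b') b') :
    b = b' :=
  Nat.dvd_antisymm ((le_rectLat_self_iff_dvd h' b).1 ((le_rectLat_self_iff_dvd h b).2 dvd_rfl))
    ((le_rectLat_self_iff_dvd h b').1 ((le_rectLat_self_iff_dvd h' b').2 dvd_rfl))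

def shearSL2 (n : ℤ) : SL(2, ℤ) := ⟨!![1, n; 0, 1], by simp [Matrix.det_fin_two_of]⟩

def euclidSL2 (q : ℤ) : SL(2, ℤ) := ⟨!![0, -1; 1, -q], by simp [Matrix.det_fin_two_of]⟩

@[simp]
lemma SL2Map_shearSL2 (n : ℤ) (v : ℤ × ℤ) : SL2Map (shearSL2 n) v = (v.1 + n * v.2, v.2) := by
  rw [SL2Map_apply]; simp [shearSL2]

@[simp]
lemma SL2Map_euclidSL2 (q : ℤ) (v : ℤ × ℤ) : SL2Map (euclidSL2 q) v = (-v.2, v.1 - q * v.2) := by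
  rw [SL2Map_apply]; simp [euclidSL2]; ring

lemma Int.dvd_of_natAbs_le_natAbs_emod {x y : ℤ} (hy : y ≠ 0)
    (h : x % y ≠ 0 → y.natAbs ≤ (x % y).natAbs) : y ∣ x := by
  by_contra hxy
  have := h fun h0 => hxy (Int.dvd_of_emod_eq_zero h0)
  have := Int.emod_nonneg x hy
  have := Int.emod_lt x hy
  omega

lemma rectLat_zero_zero : rectLat 0 0 = ⊥ := by
  ext v
  simp [mem_rectLat, Prod.ext_iff]

lemma exists_eq_rectLat_of_mem {Λ : AddSubgroup (ℤ × ℤ)} {t : ℤ} (ht : ((0 : ℤ), t) ∈ Λ)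
    (hdvd : ∀ u ∈ Λ, t ∣ u.2) : ∃ m : ℕ, Λ = rectLat m t.natAbs := by
  obtain ⟨c, hc⟩ := Int.subgroup_cyclic (Λ.comap (AddMonoidHom.inl ℤ ℤ))
  have hfst (x : ℤ) : (x, (0 : ℤ)) ∈ Λ ↔ c ∣ x := by
    rw [← Int.mem_zmultiples_iff, AddSubgroup.zmultiples_eq_closure, ← hc]
    rfl
  refine ⟨c.natAbs, AddSubgroup.ext fun u => ?_⟩
  rw [mem_rectLat, Int.natAbs_dvd, Int.natAbs_dvd, ← hfst]
  refine ⟨fun hu => ⟨?_, hdvd u hu⟩, fun ⟨hu₁, hu₂⟩ => ?_⟩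
  · obtain ⟨j, hj⟩ := hdvd u hu
    convert sub_mem hu (zsmul_mem ht j) using 1
    simp [Prod.ext_iff, hj, mul_comm]
  · obtain ⟨j, hj⟩ := hu₂
    convert add_mem hu₁ (zsmul_mem ht j) using 1
    simp [Prod.ext_iff, hj, mul_comm]

def OrbitSndLowerBound (Λ : AddSubgroup (ℤ × ℤ)) (b : ℕ) : Prop :=
  ∀ (A : SL(2, ℤ)), ∀ w ∈ Λ.map (SL2Map A), w.2 ≠ 0 → b ≤ w.2.natAbs

namespace OrbitSndLowerBound

variable {Λ : AddSubgroup (ℤ × ℤ)} {v : ℤ × ℤ}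

lemma map {b : ℕ} (h : OrbitSndLowerBound Λ b) (B : SL(2, ℤ)) :
    OrbitSndLowerBound (Λ.map (SL2Map B)) b := fun A w hw =>
  h (A * B) w (by rwa [map_SL2Map_mul])

lemma dvd_snd (h : OrbitSndLowerBound Λ v.2.natAbs) (hv : v ∈ Λ) (hv0 : v.2 ≠ 0) {u : ℤ × ℤ}
    (hu : u ∈ Λ) : v.2 ∣ u.2 := by
  refine Int.dvd_of_natAbs_le_natAbs_emod hv0 fun hne => ?_
  have hw : (u - (u.2 / v.2) • v).2 = u.2 % v.2 := by
    simp [Int.emod_def, mul_comm]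
  rw [← hw] at hne ⊢
  refine h 1 _ ?_ hne
  rw [SL2Map_one, AddSubgroup.map_id]
  exact sub_mem hu (zsmul_mem hv _)

lemma dvd_fst (h : OrbitSndLowerBound Λ v.2.natAbs) (hv : v ∈ Λ) (hv0 : v.2 ≠ 0) :
    v.2 ∣ v.1 := by
  refine Int.dvd_of_natAbs_le_natAbs_emod hv0 fun hne => ?_
  have hw : (SL2Map (euclidSL2 (v.1 / v.2)) v).2 = v.1 % v.2 := by
    simp [Int.emod_def, mul_comm]
  rw [← hw] at hne ⊢
  exact h _ _ (AddSubgroup.mem_map_of_mem _ hv) hne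

lemma exists_map_eq_rectLat (h : OrbitSndLowerBound Λ v.2.natAbs) (hv : v ∈ Λ)
    (hv0 : v.2 ≠ 0) : ∃ (A : SL(2, ℤ)) (m : ℕ), v.2.natAbs ∣ m ∧
      Λ.map (SL2Map A) = rectLat m v.2.natAbs := by
  obtain ⟨k, hk⟩ := h.dvd_fst hv hv0
  set Λ₁ := Λ.map (SL2Map (shearSL2 (-k)))
  have h₁ := h.map (shearSL2 (-k))
  have hv₁ : ((0 : ℤ), v.2) ∈ Λ₁ :=
    ⟨v, hv, by simp [hk, mul_comm]⟩
  have hsnd (u : ℤ × ℤ) (hu : u ∈ Λ₁) : v.2 ∣ u.2 := h₁.dvd_snd (v := (0, v.2)) hv₁ hv0 hu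
  have hfst (u : ℤ × ℤ) (hu : u ∈ Λ₁) : v.2 ∣ u.1 := by
    obtain ⟨j, hj⟩ := hsnd u hu
    have hu' : (u.1, v.2) ∈ Λ₁ := by
      convert add_mem hu (zsmul_mem hv₁ (1 - j)) using 1
      simp [Prod.ext_iff, hj]
      ring
    exact h₁.dvd_fst (v := (u.1, v.2)) hu' hv0
  obtain ⟨m, hm⟩ := exists_eq_rectLat_of_mem hv₁ hsnd
  refine ⟨shearSL2 (-k), m, ?_, hm⟩
  have hm₁ : ((m : ℤ), (0 : ℤ)) ∈ Λ₁ := hm ▸ ⟨dvd_rfl, dvd_zero _⟩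
  exact Int.natAbs_dvd_natAbs.2 (hfst _ hm₁)

end OrbitSndLowerBound

lemma exists_mem_map_SL2Map_snd_ne_zero {Λ : AddSubgroup (ℤ × ℤ)} {v : ℤ × ℤ} (hv : v ∈ Λ)
    (hv0 : v ≠ 0) : ∃ (A : SL(2, ℤ)), ∃ w ∈ Λ.map (SL2Map A), w.2 ≠ 0 := by
  by_cases h2 : v.2 = 0
  · refine ⟨euclidSL2 0, _, AddSubgroup.mem_map_of_mem _ hv, ?_⟩
    simpa [Prod.ext_iff, h2] using hv0
  · exact ⟨1, v, by rwa [SL2Map_one, AddSubgroup.map_id], h2⟩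

theorem exists_map_SL2Map_eq_rectLat (Λ : AddSubgroup (ℤ × ℤ)) :
    ∃ (A : SL(2, ℤ)) (m b : ℕ), b ∣ m ∧ Λ.map (SL2Map A) = rectLat m b := by
  rcases Λ.bot_or_exists_ne_zero with rfl | ⟨u, hu, hu0⟩
  · exact ⟨1, 0, 0, dvd_rfl, by rw [AddSubgroup.map_bot, rectLat_zero_zero]⟩
  classical
  have hP : ∃ b : ℕ, b ≠ 0 ∧ ∃ (A : SL(2, ℤ)), ∃ w ∈ Λ.map (SL2Map A), w.2.natAbs = b := by
    obtain ⟨A, w, hw, hw0⟩ := exists_mem_map_SL2Map_snd_ne_zero hu hu0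
    exact ⟨_, Int.natAbs_ne_zero.2 hw0, A, w, hw, rfl⟩
  obtain ⟨hb0, A, v, hv, hvb⟩ := Nat.find_spec hP
  have hmin : OrbitSndLowerBound (Λ.map (SL2Map A)) v.2.natAbs := by
    rw [hvb]
    exact fun B w hw hw0 => Nat.find_min' hP
      ⟨Int.natAbs_ne_zero.2 hw0, B * A, w, by rwa [map_SL2Map_mul], rfl⟩
  obtain ⟨B, m, hdvd, hB⟩ := hmin.exists_map_eq_rectLat hv (Int.natAbs_ne_zero.1 (hvb ▸ hb0))
  exact ⟨B * A, m, _, hdvd, by rw [map_SL2Map_mul, hB]⟩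

/-- Every sublattice of `ℤ²` of index `N` lies in the `SL(2, ℤ)`-orbit of the sublattice
`(ab)ℤ × bℤ` for exactly one pair of positive integers `(a, b)` with `a b² = N`; that is,
the lattices `(ab)ℤ × bℤ` with `a b² = N` form a complete set of representatives of the
orbits. -/
theorem orbit_representatives (N : ℕ) (hN : 0 < N) (Λ : AddSubgroup (ℤ × ℤ))
    (hΛ : Nat.card ((ℤ × ℤ) ⧸ Λ) = N) :
    ∃! ab : ℕ × ℕ, 0 < ab.1 ∧ 0 < ab.2 ∧ ab.1 * ab.2 ^ 2 = N ∧
      ∃ A : Matrix.SpecialLinearGroup (Fin 2) ℤ,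
        Λ.map (SL2Map A) = rectLat (ab.1 * ab.2) ab.2 := by
  obtain ⟨A, _, b, ⟨a, rfl⟩, hA⟩ := exists_map_SL2Map_eq_rectLat Λ
  rw [mul_comm] at hA
  have hab : a * b ^ 2 = N := by
    rw [← hΛ, ← AddSubgroup.index, ← index_map_SL2Map A, hA, index_rectLat]
    ring
  have hpos : 0 < a ∧ 0 < b := by
    constructor <;> refine Nat.pos_of_ne_zero fun h0 => ?_ <;> simp [h0, ← hab] at hN
  refine ⟨(a, b), ⟨hpos.1, hpos.2, hab, A, hA⟩, ?_⟩
  rintro ⟨a', b'⟩ ⟨-, hb', hab', A', hA'⟩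
  obtain rfl : b' = b := eq_of_map_SL2Map_eq_rectLat hA' hA
  obtain rfl : a' = a := Nat.eq_of_mul_eq_mul_right (pow_pos hb' 2) (hab'.trans hab.symm)
  rfl
end

section
/- Let g, h : ℕ₊ → ℂ be sequences whose power series Σ_{n≥1} g(n) tⁿ and Σ_{n≥1} h(n) tⁿ both have radius of convergence at least 1, and let f = g ⋆ h be their Dirichlet convolution, f(n) = Σ_{d ∣ n} g(d) h(n/d). Then for every complex t with |t| < 1, Σ_{n=1}^∞ f(n) tⁿ = Σ_{m=1}^∞ g(m) (Σ_{k=1}^∞ h(k) t^{mk}), with all series converging absolutely. -/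
/-!
With `r = √‖t‖ < 1` one has `‖t‖ ^ (m * k) ≤ r ^ (m + k)` for `m, k ≥ 1`, because
`m + k ≤ 2 * m * k`. Hence the double series `∑_{m,k ≥ 1} g(m) h(k) t^(m k)` is dominated by the
product of the convergent series `∑ ‖g(m)‖ r^m` and `∑ ‖h(k)‖ r^k`, so it converges absolutely.
Summing it by rows gives the right-hand side; grouping its terms by `n = m k`, i.e. over the
divisor antidiagonal of `n`, gives `∑ f(n) tⁿ`.
-/

open Finset

theorem sq_pow_mul_le_pow_add {r : ℝ} (hr₀ : 0 ≤ r) (hr₁ : r ≤ 1) {m k : ℕ} (hm : 0 < m)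
    (hk : 0 < k) : (r ^ 2) ^ (m * k) ≤ r ^ (m + k) := by
  rw [← pow_mul]
  exact pow_le_pow_of_le_one hr₀ hr₁ (by nlinarith)

section Fiberwise

variable {E : Type*} [AddCommMonoid E] [TopologicalSpace E] [ContinuousAdd E] [RegularSpace E]

theorem HasSum.pnat_sum_divisorsAntidiagonal {F : ℕ × ℕ → E} {s : E}
    (hF : HasSum (fun p : ℕ+ × ℕ+ => F (p.1, p.2)) s) :
    HasSum (fun n : ℕ+ => ∑ p ∈ (n : ℕ).divisorsAntidiagonal, F p) s :=
  (sigmaAntidiagonalEquivProd.hasSum_iff.mpr hF).sigma fun n =>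
    Finset.hasSum (n : ℕ).divisorsAntidiagonal F

theorem HasSum.succ_sum_divisorsAntidiagonal {F : ℕ × ℕ → E} {s : E}
    (hF : HasSum (fun p : ℕ × ℕ => F (p.1 + 1, p.2 + 1)) s) :
    HasSum (fun n : ℕ => ∑ p ∈ (n + 1).divisorsAntidiagonal, F p) s := by
  refine (hasSum_pnat_iff_hasSum_succ (f := fun n => ∑ p ∈ n.divisorsAntidiagonal, F p)).mp
    (HasSum.pnat_sum_divisorsAntidiagonal ?_)
  exact (Equiv.pnatEquivNat.prodCongr Equiv.pnatEquivNat).symm.hasSum_iff.mp hF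

end Fiberwise

theorem sum_divisorsAntidiagonal_mul_mul_pow {R : Type*} [CommSemiring R] (a b : ℕ → R) (t : R)
    (n : ℕ) :
    ∑ p ∈ n.divisorsAntidiagonal, a p.1 * b p.2 * t ^ (p.1 * p.2) =
      (∑ d ∈ n.divisors, a d * b (n / d)) * t ^ n := by
  rw [sum_mul, ← Nat.sum_divisorsAntidiagonal (fun d e => a d * b e * t ^ n)]
  exact sum_congr rfl fun p hp => by rw [(Nat.mem_divisorsAntidiagonal.mp hp).1]

section LambertSeries

variable {𝕜 : Type*} [NormedField 𝕜] {a b : ℕ → 𝕜} {t : 𝕜}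

theorem summable_norm_mul_mul_pow_mul_succ {r : ℝ} (hr₀ : 0 ≤ r) (hr₁ : r ≤ 1)
    (ht : ‖t‖ ≤ r ^ 2) (ha : Summable fun m => ‖a (m + 1)‖ * r ^ (m + 1))
    (hb : Summable fun k => ‖b (k + 1)‖ * r ^ (k + 1)) :
    Summable fun p : ℕ × ℕ => ‖a (p.1 + 1) * b (p.2 + 1) * t ^ ((p.1 + 1) * (p.2 + 1))‖ := by
  refine (ha.mul_of_nonneg hb (fun _ => by positivity) fun _ => by positivity).of_nonneg_of_le
    (fun _ => norm_nonneg _) fun ⟨m, k⟩ => ?_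
  calc ‖a (m + 1) * b (k + 1) * t ^ ((m + 1) * (k + 1))‖
      = ‖a (m + 1)‖ * ‖b (k + 1)‖ * ‖t‖ ^ ((m + 1) * (k + 1)) := by
        rw [norm_mul, norm_mul, norm_pow]
    _ ≤ ‖a (m + 1)‖ * ‖b (k + 1)‖ * r ^ ((m + 1) + (k + 1)) := by
        gcongr
        exact (pow_le_pow_left₀ (norm_nonneg t) ht _).trans
          (sq_pow_mul_le_pow_add hr₀ hr₁ m.succ_pos k.succ_pos)
    _ = ‖a (m + 1)‖ * r ^ (m + 1) * (‖b (k + 1)‖ * r ^ (k + 1)) := by ring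

variable (hF : Summable fun p : ℕ × ℕ =>
  ‖a (p.1 + 1) * b (p.2 + 1) * t ^ ((p.1 + 1) * (p.2 + 1))‖)
include hF

theorem summable_norm_sum_divisors_mul_pow_succ :
    Summable fun n => ‖(∑ d ∈ (n + 1).divisors, a d * b ((n + 1) / d)) * t ^ (n + 1)‖ := by
  have hfib := (HasSum.succ_sum_divisorsAntidiagonal
    (F := fun p => ‖a p.1 * b p.2 * t ^ (p.1 * p.2)‖) hF.hasSum).summable
  refine hfib.of_nonneg_of_le (fun _ => norm_nonneg _) fun n => ?_
  rw [← sum_divisorsAntidiagonal_mul_mul_pow]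
  exact norm_sum_le _ _

theorem summable_norm_mul_tsum_pow_mul_succ :
    Summable fun m => ‖a (m + 1) * ∑' k, b (k + 1) * t ^ ((m + 1) * (k + 1))‖ := by
  obtain ⟨hrows, hrowSums⟩ := (summable_prod_of_nonneg fun _ => norm_nonneg _).mp hF
  refine hrowSums.of_nonneg_of_le (fun _ => norm_nonneg _) fun m => ?_
  rw [← tsum_mul_left]
  simp only [← mul_assoc]
  exact norm_tsum_le_tsum_norm (hrows m)

theorem tsum_sum_divisors_mul_pow_succ [CompleteSpace 𝕜] :
    ∑' n, (∑ d ∈ (n + 1).divisors, a d * b ((n + 1) / d)) * t ^ (n + 1) =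
      ∑' m, a (m + 1) * ∑' k, b (k + 1) * t ^ ((m + 1) * (k + 1)) := by
  have hsum := hF.of_norm
  calc ∑' n, (∑ d ∈ (n + 1).divisors, a d * b ((n + 1) / d)) * t ^ (n + 1)
      = ∑' n, ∑ p ∈ (n + 1).divisorsAntidiagonal, a p.1 * b p.2 * t ^ (p.1 * p.2) := by
        simp only [sum_divisorsAntidiagonal_mul_mul_pow]
    _ = ∑' p : ℕ × ℕ, a (p.1 + 1) * b (p.2 + 1) * t ^ ((p.1 + 1) * (p.2 + 1)) :=
        (HasSum.succ_sum_divisorsAntidiagonal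
          (F := fun p => a p.1 * b p.2 * t ^ (p.1 * p.2)) hsum.hasSum).tsum_eq
    _ = ∑' m, ∑' k, a (m + 1) * b (k + 1) * t ^ ((m + 1) * (k + 1)) := hsum.tsum_prod
    _ = ∑' m, a (m + 1) * ∑' k, b (k + 1) * t ^ ((m + 1) * (k + 1)) := by
        simp only [← tsum_mul_left, mul_assoc]

end LambertSeries

theorem summable_norm_mul_ofReal_pow_succ {a : ℕ → ℂ}
    (ha : ∀ t : ℂ, ‖t‖ < 1 → Summable fun n : ℕ => ‖a (n + 1) * t ^ (n + 1)‖) {r : ℝ}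
    (hr₀ : 0 ≤ r) (hr₁ : r < 1) : Summable fun n => ‖a (n + 1)‖ * r ^ (n + 1) := by
  have hr : ‖(r : ℂ)‖ = r := by rw [Complex.norm_real, Real.norm_of_nonneg hr₀]
  simpa only [norm_mul, norm_pow, hr] using ha r (by rwa [hr])

/-- If the power series of `g` and `h` (indexed by positive integers) both have radius of
convergence at least 1, and `f = g ⋆ h` is their Dirichlet convolution
`f(n) = ∑_{d ∣ n} g(d) h(n/d)`, then for `|t| < 1` one has
`∑_{n ≥ 1} f(n) tⁿ = ∑_{m ≥ 1} g(m) (∑_{k ≥ 1} h(k) t^{mk})`, with all series converging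
absolutely. (Sequences on positive integers are modelled as `ℕ → ℂ` evaluated at `n + 1`.) -/
theorem dirichlet_convolution_power_series (g h : ℕ → ℂ)
    (hg : ∀ t : ℂ, ‖t‖ < 1 → Summable fun n : ℕ => ‖g (n + 1) * t ^ (n + 1)‖)
    (hh : ∀ t : ℂ, ‖t‖ < 1 → Summable fun n : ℕ => ‖h (n + 1) * t ^ (n + 1)‖)
    (f : ℕ → ℂ) (hf : ∀ n : ℕ, 0 < n → f n = ∑ d ∈ n.divisors, g d * h (n / d))
    (t : ℂ) (ht : ‖t‖ < 1) :
    (Summable fun n : ℕ => ‖f (n + 1) * t ^ (n + 1)‖) ∧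
    (∀ m : ℕ, Summable fun k : ℕ => ‖h (k + 1) * t ^ ((m + 1) * (k + 1))‖) ∧
    (Summable fun m : ℕ => ‖g (m + 1) * ∑' k : ℕ, h (k + 1) * t ^ ((m + 1) * (k + 1))‖) ∧
    ∑' n : ℕ, f (n + 1) * t ^ (n + 1) =
      ∑' m : ℕ, g (m + 1) * ∑' k : ℕ, h (k + 1) * t ^ ((m + 1) * (k + 1)) := by
  have hr₀ : 0 ≤ √‖t‖ := Real.sqrt_nonneg _
  have hr₁ : √‖t‖ < 1 := (Real.sqrt_lt' one_pos).mpr (by rwa [one_pow])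
  have hF := summable_norm_mul_mul_pow_mul_succ hr₀ hr₁.le (Real.sq_sqrt (norm_nonneg t)).ge
    (summable_norm_mul_ofReal_pow_succ hg hr₀ hr₁) (summable_norm_mul_ofReal_pow_succ hh hr₀ hr₁)
  have hf' : ∀ n : ℕ, f (n + 1) = ∑ d ∈ (n + 1).divisors, g d * h ((n + 1) / d) :=
    fun n => hf _ n.succ_pos
  simp only [hf']
  refine ⟨summable_norm_sum_divisors_mul_pow_succ hF, fun m => ?_,
    summable_norm_mul_tsum_pow_mul_succ hF, tsum_sum_divisors_mul_pow_succ hF⟩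
  have htm : ‖t ^ (m + 1)‖ < 1 := by
    rw [norm_pow]
    exact pow_lt_one₀ (norm_nonneg t) ht m.succ_ne_zero
  simpa only [← pow_mul] using hh _ htm
end
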